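/- The Werner state σ_{1/2} = (1/2)|φ⁺⟩⟨φ⁺| + (1/8)I₄ satisfies S(σ_{1/2}) ≥ 1 (hence belongs to ACVENN), but its partial transpose has a negative eigenvalue, so σ_{1/2} is not separable and therefore not absolutely separable. -/

import Mathlib

open Matrix Finset
open scoped Kronecker ComplexOrder Classical

noncomputable section

/-- A quantum state: positive semidefinite matrix of trace 1. -/
def IsState {n : ℕ} (ρ : Matrix (Fin n) (Fin n) ℂ) : Prop :=
  ρ.PosSemidef ∧ ρ.trace = 1

/-- Von Neumann entropy `S(ρ) = -∑ᵢ λᵢ log₂ λᵢ` over the eigenvalues of `ρ`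
(with the convention `0 · log₂ 0 = 0`, which holds since `Real.logb 2 0 = 0`). -/
noncomputable def vnEntropy {n : ℕ} (ρ : Matrix (Fin n) (Fin n) ℂ) : ℝ :=
  if h : ρ.IsHermitian then -∑ i, h.eigenvalues i * Real.logb 2 (h.eigenvalues i) else 0

/-- Reduced state `ρ_A`: partial trace over the second tensor factor,
using the ordered product basis `|00⟩,|01⟩,|10⟩,|11⟩`, i.e. `|ab⟩ ↦ 2a+b`. -/
def ptraceB (ρ : Matrix (Fin 4) (Fin 4) ℂ) : Matrix (Fin 2) (Fin 2) ℂ :=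
  Matrix.of fun i j => ∑ k : Fin 2,
    ρ ⟨2 * i.val + k.val, by omega⟩ ⟨2 * j.val + k.val, by omega⟩

/-- Reduced state `ρ_B`: partial trace over the first tensor factor. -/
def ptraceA (ρ : Matrix (Fin 4) (Fin 4) ℂ) : Matrix (Fin 2) (Fin 2) ℂ :=
  Matrix.of fun i j => ∑ k : Fin 2,
    ρ ⟨2 * k.val + i.val, by omega⟩ ⟨2 * k.val + j.val, by omega⟩

/-- Conditional von Neumann entropy `S(A|B) = S(ρ_AB) - S(ρ_A)`. -/
def condEntropy (ρ : Matrix (Fin 4) (Fin 4) ℂ) : ℝ :=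
  vnEntropy ρ - vnEntropy (ptraceB ρ)

/-- Rank-one projector `|v⟩⟨v|`. -/
def proj (v : Fin 4 → ℂ) : Matrix (Fin 4) (Fin 4) ℂ := Matrix.vecMulVec v (star v)

/-- The Bell basis `|φ⁺⟩, |φ⁻⟩, |ψ⁺⟩, |ψ⁻⟩`. -/
noncomputable def bell : Fin 4 → Fin 4 → ℂ :=
  ![![(Real.sqrt 2 : ℂ)⁻¹, 0, 0, (Real.sqrt 2 : ℂ)⁻¹],
    ![(Real.sqrt 2 : ℂ)⁻¹, 0, 0, -(Real.sqrt 2 : ℂ)⁻¹],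
    ![0, (Real.sqrt 2 : ℂ)⁻¹, (Real.sqrt 2 : ℂ)⁻¹, 0],
    ![0, (Real.sqrt 2 : ℂ)⁻¹, -(Real.sqrt 2 : ℂ)⁻¹, 0]]

/-- Kronecker product of two one-qubit matrices as a `4 × 4` matrix,
with the index identification `(a,b) ↦ 2a+b`. -/
def kron (A B : Matrix (Fin 2) (Fin 2) ℂ) : Matrix (Fin 4) (Fin 4) ℂ :=
  Matrix.reindex finProdFinEquiv finProdFinEquiv (A ⊗ₖ B)

/-- A two-qubit state is separable if it is a convex combination of product states. -/
def Separable (σ : Matrix (Fin 4) (Fin 4) ℂ) : Prop :=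
  ∃ (m : ℕ) (p : Fin m → ℝ) (α β : Fin m → Matrix (Fin 2) (Fin 2) ℂ),
    (∀ i, 0 ≤ p i) ∧ (∑ i, p i = 1) ∧ (∀ i, IsState (α i)) ∧ (∀ i, IsState (β i)) ∧
    σ = ∑ i, (p i : ℂ) • kron (α i) (β i)

/-- The Werner state `σ_p = p|φ⁺⟩⟨φ⁺| + (1-p) I₄/4`. -/
noncomputable def werner (p : ℝ) : Matrix (Fin 4) (Fin 4) ℂ :=
  (p : ℂ) • proj (bell 0) + (((1 - p) / 4 : ℝ) : ℂ) • 1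

/-- Partial transposition on the second tensor factor. -/
def ptransposeB (ρ : Matrix (Fin 4) (Fin 4) ℂ) : Matrix (Fin 4) (Fin 4) ℂ :=
  Matrix.of fun i j =>
    ρ ⟨2 * (i.val / 2) + j.val % 2, by omega⟩ ⟨2 * (j.val / 2) + i.val % 2, by omega⟩

/-!
The Werner state `σ_p` is the rank-one perturbation `p |φ⁺⟩⟨φ⁺| + (1 - p)/4 · I` of a scalar
matrix, so its characteristic polynomial, and hence its spectrum
`((1 + 3p)/4, (1 - p)/4, (1 - p)/4, (1 - p)/4)`, can be read off directly. The spectrum is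
invariant under unitary conjugation, so `S(U σ_{1/2} U†) = 3 - (5/8) log₂ 5 ≥ 1` for every `U`
(as `5⁵ ≤ 2¹⁶`), while the reduced state of a two-qubit state is a qubit state, whose entropy is
a binary entropy and so at most `1`. The partial transpose of `σ_p` has the eigenvector
`|01⟩ - |10⟩` with eigenvalue `(1 - 3p)/4`, negative for `p > 1/3`, whereas partial transposes
of separable states are sums of Kronecker products of positive matrices.
-/

open Polynomial in
theorem vnEntropy_eq_of_charpoly_eq_prod {n : ℕ} {A : Matrix (Fin n) (Fin n) ℂ}
    (hA : A.IsHermitian) {ι : Type*} [Fintype ι] (d : ι → ℝ)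
    (h : A.charpoly = ∏ i, (X - C (d i : ℂ))) :
    vnEntropy A = -∑ i, d i * Real.logb 2 (d i) := by
  have hroots : univ.val.map (fun i => (hA.eigenvalues i : ℂ)) =
      univ.val.map (fun i => (d i : ℂ)) := by
    have := hA.roots_charpoly_eq_eigenvalues
    rw [h, roots_prod _ _ (by simp [prod_ne_zero_iff, X_sub_C_ne_zero])] at this
    simpa [Function.comp_def] using this.symm
  have h_sum := congrArg (fun s : Multiset ℂ => (s.map fun z => z.re * Real.logb 2 z.re).sum) hroots
  simp only [Multiset.map_map, Function.comp_def, Complex.ofReal_re] at h_sum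
  rw [vnEntropy, dif_pos hA, sum_eq_multiset_sum, sum_eq_multiset_sum, h_sum]

theorem charpoly_unitary_conj {n : ℕ} {U : Matrix (Fin n) (Fin n) ℂ}
    (hU : U ∈ unitaryGroup (Fin n) ℂ) (A : Matrix (Fin n) (Fin n) ℂ) :
    (U * A * Uᴴ).charpoly = A.charpoly := by
  rw [charpoly_mul_comm, ← mul_assoc, ← star_eq_conjTranspose, (mem_unitaryGroup_iff').mp hU,
    one_mul]

theorem vnEntropy_unitary_conj {n : ℕ} {ρ U : Matrix (Fin n) (Fin n) ℂ} (hρ : ρ.IsHermitian)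
    (hU : U ∈ unitaryGroup (Fin n) ℂ) : vnEntropy (U * ρ * Uᴴ) = vnEntropy ρ := by
  have hUρ : (U * ρ * Uᴴ).IsHermitian := isHermitian_mul_mul_conjTranspose U hρ
  have heig := (hUρ.eigenvalues_eq_eigenvalues_iff hρ).mpr (charpoly_unitary_conj hU ρ)
  rw [vnEntropy, vnEntropy, dif_pos hUρ, dif_pos hρ, heig]

theorem neg_sum_mul_logb_eq_binEntropy (a : ℝ) :
    -(a * Real.logb 2 a + (1 - a) * Real.logb 2 (1 - a)) = Real.binEntropy a / Real.log 2 := by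
  simp only [Real.binEntropy_eq_negMulLog_add_negMulLog_one_sub, Real.negMulLog, Real.logb]
  ring

theorem vnEntropy_le_one_of_isState {ρ : Matrix (Fin 2) (Fin 2) ℂ} (hρ : IsState ρ) :
    vnEntropy ρ ≤ 1 := by
  have hH := hρ.1.isHermitian
  have hsum : hH.eigenvalues 1 = 1 - hH.eigenvalues 0 := by
    have := congrArg Complex.re hH.trace_eq_sum_eigenvalues
    simp only [hρ.2, Complex.one_re, Complex.coe_algebraMap, Fin.sum_univ_two, Complex.add_re,
      Complex.ofReal_re] at this
    linarith
  rw [vnEntropy, dif_pos hH, Fin.sum_univ_two, hsum, neg_sum_mul_logb_eq_binEntropy,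
    div_le_one (Real.log_pos one_lt_two)]
  exact Real.binEntropy_le_log_two

theorem IsState.unitary_conj {n : ℕ} {ρ U : Matrix (Fin n) (Fin n) ℂ} (hρ : IsState ρ)
    (hU : U ∈ unitaryGroup (Fin n) ℂ) : IsState (U * ρ * Uᴴ) := by
  refine ⟨hρ.1.mul_mul_conjTranspose_same U, ?_⟩
  rw [trace_mul_cycle, ← star_eq_conjTranspose, (mem_unitaryGroup_iff').mp hU, one_mul, hρ.2]

theorem ptraceB_eq_sum_submatrix (ρ : Matrix (Fin 4) (Fin 4) ℂ) :
    ptraceB ρ = ∑ k : Fin 2, ρ.submatrix (fun i : Fin 2 => ⟨2 * i.val + k.val, by omega⟩)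
      (fun i => ⟨2 * i.val + k.val, by omega⟩) := by
  ext i j
  simp [ptraceB, Matrix.sum_apply]

theorem trace_ptraceB (ρ : Matrix (Fin 4) (Fin 4) ℂ) : (ptraceB ρ).trace = ρ.trace := by
  simp [Matrix.trace, ptraceB, Fin.sum_univ_four, add_assoc]

theorem IsState.ptraceB {ρ : Matrix (Fin 4) (Fin 4) ℂ} (hρ : IsState ρ) :
    IsState (ptraceB ρ) := by
  refine ⟨?_, (trace_ptraceB ρ).trans hρ.2⟩
  rw [ptraceB_eq_sum_submatrix]
  exact posSemidef_sum _ fun k _ => hρ.1.submatrix _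

theorem condEntropy_nonneg_of_one_le_vnEntropy {ρ : Matrix (Fin 4) (Fin 4) ℂ} (hρ : IsState ρ)
    (h : 1 ≤ vnEntropy ρ) : 0 ≤ condEntropy ρ :=
  sub_nonneg.mpr ((vnEntropy_le_one_of_isState hρ.ptraceB).trans h)

theorem ptransposeB_kron (A B : Matrix (Fin 2) (Fin 2) ℂ) :
    ptransposeB (kron A B) = kron A Bᵀ := by
  ext i j
  fin_cases i <;> fin_cases j <;> rfl

theorem Separable.posSemidef_ptransposeB {σ : Matrix (Fin 4) (Fin 4) ℂ} (hσ : Separable σ) :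
    (ptransposeB σ).PosSemidef := by
  obtain ⟨m, p, α, β, hp, -, hα, hβ, rfl⟩ := hσ
  have hpt : ptransposeB (∑ i, (p i : ℂ) • kron (α i) (β i)) =
      ∑ i, (p i : ℂ) • kron (α i) (β i)ᵀ := by
    simp only [← ptransposeB_kron]
    ext i j
    simp [ptransposeB, Matrix.sum_apply]
  have hkron (i : Fin m) : (kron (α i) (β i)ᵀ).PosSemidef :=
    ((hα i).1.kronecker (hβ i).1.transpose).submatrix _
  rw [hpt]
  exact posSemidef_sum _ fun i _ => (hkron i).smul (Complex.zero_le_real.mpr (hp i))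

open Polynomial in
theorem charpoly_vecMulVec_add_scalar {R n : Type*} [CommRing R] [Fintype n] [DecidableEq n]
    [Nonempty n] (u v : n → R) (c : R) :
    (vecMulVec u v + scalar n c).charpoly =
      (X - C c) ^ (Fintype.card n - 1) * (X - C (c + u ⬝ᵥ v)) := by
  have h := charpoly_sub_scalar (vecMulVec u v + scalar n c) c
  rw [add_sub_cancel_right, charpoly_vecMulVec] at h
  have h' := congrArg (fun q => q.comp (X - C c)) h
  simp only [Polynomial.comp_assoc, sub_comp, pow_comp, smul_comp, X_comp, add_comp, C_comp,
    sub_add_cancel, comp_X] at h'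
  obtain ⟨k, hk⟩ : ∃ k, Fintype.card n = k + 1 :=
    Nat.exists_eq_succ_of_ne_zero Fintype.card_ne_zero
  rw [← h', hk, Nat.add_sub_cancel, pow_succ, smul_eq_C_mul, map_add]
  ring

theorem inv_sqrt_two_mul_inv_sqrt_two :
    ((Real.sqrt 2 : ℂ))⁻¹ * ((Real.sqrt 2 : ℂ))⁻¹ = (2 : ℂ)⁻¹ := by
  rw [← mul_inv, ← Complex.ofReal_mul, Real.mul_self_sqrt zero_le_two, Complex.ofReal_ofNat]

theorem dotProduct_star_bell_zero : bell 0 ⬝ᵥ star (bell 0) = 1 := by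
  simp [bell, dotProduct, Fin.sum_univ_four, inv_sqrt_two_mul_inv_sqrt_two]
  norm_num

theorem werner_eq_vecMulVec_add_scalar (p : ℝ) :
    werner p = vecMulVec ((p : ℂ) • bell 0) (star (bell 0)) +
      scalar (Fin 4) (((1 - p) / 4 : ℝ) : ℂ) := by
  rw [werner, proj, smul_vecMulVec, smul_one_eq_diagonal]
  rfl

open Polynomial in
theorem charpoly_werner (p : ℝ) :
    (werner p).charpoly =
      ∏ i, (X - C ((![(1 + 3 * p) / 4, (1 - p) / 4, (1 - p) / 4, (1 - p) / 4] i : ℝ) : ℂ)) := by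
  rw [werner_eq_vecMulVec_add_scalar, charpoly_vecMulVec_add_scalar, smul_dotProduct,
    dotProduct_star_bell_zero, Fintype.card_fin, Fin.prod_univ_four]
  simp only [Fin.isValue, Matrix.cons_val, smul_eq_mul, mul_one]
  rw [show (((1 + 3 * p) / 4 : ℝ) : ℂ) = (((1 - p) / 4 : ℝ) : ℂ) + p by push_cast; ring]
  ring

theorem isHermitian_werner (p : ℝ) : (werner p).IsHermitian :=
  ((posSemidef_vecMulVec_self_star (bell 0)).isHermitian.smul (Complex.conj_ofReal p)).add
    (isHermitian_one.smul (Complex.conj_ofReal _))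

theorem vnEntropy_werner (p : ℝ) :
    vnEntropy (werner p) = -((1 + 3 * p) / 4 * Real.logb 2 ((1 + 3 * p) / 4) +
      3 * ((1 - p) / 4 * Real.logb 2 ((1 - p) / 4))) := by
  rw [vnEntropy_eq_of_charpoly_eq_prod (isHermitian_werner p) _ (charpoly_werner p),
    Fin.sum_univ_four]
  simp only [Fin.isValue, Matrix.cons_val]
  ring

theorem one_le_vnEntropy_werner_half : 1 ≤ vnEntropy (werner (1 / 2)) := by
  have hlogb5 : Real.logb 2 5 ≤ 16 / 5 := by
    have h := Real.logb_le_logb_of_le (b := 2) one_lt_two (by norm_num)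
      (show (5 : ℝ) ^ 5 ≤ 2 ^ 16 by norm_num)
    rw [Real.logb_pow, Real.logb_pow, Real.logb_self_eq_one one_lt_two] at h
    push_cast at h
    linarith
  have hlogb8 : Real.logb 2 8 = 3 := by
    rw [show (8 : ℝ) = 2 ^ 3 by norm_num, Real.logb_pow, Real.logb_self_eq_one one_lt_two]
    ring
  rw [vnEntropy_werner, show (1 + 3 * (1 / 2) : ℝ) / 4 = 5 / 8 by norm_num,
    show (1 - 1 / 2 : ℝ) / 4 = 1 / 8 by norm_num, Real.logb_div (by norm_num) (by norm_num),
    Real.logb_div one_ne_zero (by norm_num), hlogb8, Real.logb_one]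
  linarith

theorem isState_werner {p : ℝ} (hp₀ : 0 ≤ p) (hp₁ : p ≤ 1) : IsState (werner p) := by
  refine ⟨((posSemidef_vecMulVec_self_star _).smul (Complex.zero_le_real.mpr hp₀)).add
    (PosSemidef.one.smul (Complex.zero_le_real.mpr (by linarith))), ?_⟩
  rw [werner_eq_vecMulVec_add_scalar, trace_add, trace_vecMulVec, smul_dotProduct,
    dotProduct_star_bell_zero]
  simp only [scalar_apply, trace_diagonal, sum_const, card_univ, Fintype.card_fin, nsmul_eq_mul,
    smul_eq_mul, mul_one]
  push_cast
  ring

theorem werner_eq_of (p : ℝ) :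
    werner p = !![(1 + p : ℂ) / 4, 0, 0, p / 2; 0, (1 - p) / 4, 0, 0; 0, 0, (1 - p) / 4, 0;
      p / 2, 0, 0, (1 + p) / 4] := by
  ext i j
  fin_cases i <;> fin_cases j <;>
    simp [werner, proj, bell, vecMulVec_apply, one_apply, -cons_vecMulVec,
      inv_sqrt_two_mul_inv_sqrt_two] <;> ring

theorem ptransposeB_werner_mulVec (p : ℝ) :
    ptransposeB (werner p) *ᵥ ![0, 1, -1, 0] = (((1 - 3 * p) / 4 : ℝ) : ℂ) • ![0, 1, -1, 0] := by
  rw [werner_eq_of]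
  ext i
  fin_cases i <;> simp [ptransposeB, mulVec, dotProduct, Fin.sum_univ_four] <;> ring

theorem not_separable_werner {p : ℝ} (hp : 1 / 3 < p) : ¬ Separable (werner p) := by
  intro hsep
  have h := hsep.posSemidef_ptransposeB.dotProduct_mulVec_nonneg ![0, 1, -1, 0]
  have hnorm : star ![(0 : ℂ), 1, -1, 0] ⬝ᵥ ![0, 1, -1, 0] = ((2 : ℝ) : ℂ) := by
    simp [dotProduct, Fin.sum_univ_four]
    norm_num
  rw [ptransposeB_werner_mulVec, dotProduct_smul, hnorm, smul_eq_mul, ← Complex.ofReal_mul,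
    Complex.zero_le_real] at h
  linarith

/-- The Werner state `σ_{1/2}` satisfies `S(σ_{1/2}) ≥ 1` (hence is in
ACVENN), but its partial transpose has a negative eigenvalue, so it is not separable
and therefore not absolutely separable. -/
theorem stmt_8 :
    1 ≤ vnEntropy (werner (1 / 2)) ∧
    (IsState (werner (1 / 2)) ∧
      ∀ U ∈ Matrix.unitaryGroup (Fin 4) ℂ, 0 ≤ condEntropy (U * werner (1 / 2) * Uᴴ)) ∧
    (∃ (c : ℝ) (v : Fin 4 → ℂ), c < 0 ∧ v ≠ 0 ∧
      (ptransposeB (werner (1 / 2))).mulVec v = (c : ℂ) • v) ∧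
    ¬ Separable (werner (1 / 2)) ∧
    ¬ (∀ U ∈ Matrix.unitaryGroup (Fin 4) ℂ, Separable (U * werner (1 / 2) * Uᴴ)) := by
  have hstate : IsState (werner (1 / 2)) := isState_werner (by norm_num) (by norm_num)
  have hnotsep : ¬ Separable (werner (1 / 2)) := not_separable_werner (by norm_num)
  refine ⟨one_le_vnEntropy_werner_half, ⟨hstate, fun U hU => ?_⟩,
    ⟨-1 / 8, ![0, 1, -1, 0], by norm_num, fun h => by simpa using congrFun h 1, ?_⟩,
    hnotsep, fun hAS => hnotsep ?_⟩
  · refine condEntropy_nonneg_of_one_le_vnEntropy (hstate.unitary_conj hU) ?_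
    rw [vnEntropy_unitary_conj hstate.1.isHermitian hU]
    exact one_le_vnEntropy_werner_half
  · rw [ptransposeB_werner_mulVec]
    norm_num
  · simpa using hAS 1 (one_mem _)
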